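/- arXiv:1605.09057 — 3 statements merged into one kernel-verified Lean document; each statement's English description precedes it below -/
import Mathlib

section
/- Let A be a skew PBW extension of a ring R with variables x_1,…,x_n. Then for every 1 ≤ i ≤ n there exist an injective ring endomorphism σ_i : R → R and a σ_i-derivation δ_i : R → R (i.e., δ_i is additive and δ_i(rs) = σ_i(r)δ_i(s) + δ_i(r)s) such that x_i r = σ_i(r) x_i + δ_i(r) for every r ∈ R. -/
/-- A *skew PBW extension* of a ring `R` inside a ring `A`, with variables `x 0, …, x (n-1)`.
`ι : R →+* A` is the inclusion (condition (i));
`basis` says that `A` is a free left `R`-module with basis the standard monomials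
`x 0 ^ α 0 * ⋯ * x (n-1) ^ α (n-1)` (condition (ii));
`cond3` and `cond4` are conditions (iii) and (iv) of the definition. -/
structure SkewPBWExtension (R A : Type*) [Ring R] [Ring A] (n : ℕ) (x : Fin n → A) where
  ι : R →+* A
  ι_injective : Function.Injective ι
  basis : ∀ a : A, ∃! c : (Fin n → ℕ) →₀ R,
    a = c.sum fun α r => ι r * (List.ofFn fun i => x i ^ α i).prod
  cond3 : ∀ (i : Fin n) (r : R), r ≠ 0 →
    ∃ c : R, c ≠ 0 ∧ ∃ r' : R, x i * ι r = ι c * x i + ι r'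
  cond4 : ∀ i j : Fin n, ∃ c : R, c ≠ 0 ∧
    ∃ (r0 : R) (r' : Fin n → R), x j * x i = ι c * (x i * x j) + ι r0 + ∑ k, ι (r' k) * x k

private lemma prod_ofFn_eq_of_single {M : Type*} [Monoid M] :
    ∀ {n : ℕ} (g : Fin n → M) (i : Fin n),
    (∀ j, j ≠ i → g j = 1) → (List.ofFn g).prod = g i
  | n + 1, g, i, h => by
    rw [List.ofFn_succ, List.prod_cons]
    rcases Fin.eq_zero_or_eq_succ i with h0 | ⟨i', rfl⟩
    · subst h0
      have ht : (List.ofFn fun j : Fin n => g j.succ).prod = 1 := by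
        apply List.prod_eq_one
        intro a ha
        rw [List.mem_ofFn] at ha
        obtain ⟨j, rfl⟩ := ha
        exact h _ (Fin.succ_ne_zero j)
      rw [ht, mul_one]
    · rw [h 0 (Ne.symm (Fin.succ_ne_zero i')), one_mul]
      exact prod_ofFn_eq_of_single _ i' fun j hj => h j.succ (by simpa using hj)

private lemma prod_ofFn_pow_zero {A : Type*} [Monoid A] {n : ℕ} (x : Fin n → A) :
    (List.ofFn fun j => x j ^ (0 : Fin n → ℕ) j).prod = 1 := by
  apply List.prod_eq_one
  intro a ha
  rw [List.mem_ofFn] at ha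
  obtain ⟨j, rfl⟩ := ha
  simp

/-- For every `1 ≤ i ≤ n` there exist an injective ring endomorphism `σᵢ : R → R` and a
`σᵢ`-derivation `δᵢ : R → R` (additive, with `δᵢ(rs) = σᵢ(r)δᵢ(s) + δᵢ(r)s`) such that
`xᵢ r = σᵢ(r) xᵢ + δᵢ(r)` for every `r ∈ R`. -/
theorem skewPBWExtension_exists_sigma_delta {R A : Type*} [Ring R] [Ring A] {n : ℕ}
    {x : Fin n → A} (E : SkewPBWExtension R A n x) (i : Fin n) :
    ∃ (σ : R →+* R) (δ : R → R), Function.Injective σ ∧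
      (∀ r s : R, δ (r + s) = δ r + δ s) ∧
      (∀ r s : R, δ (r * s) = σ r * δ s + δ r * s) ∧
      (∀ r : R, x i * E.ι r = E.ι (σ r) * x i + E.ι (δ r)) := by
  classical
  set f : (Fin n → ℕ) → R → A := fun α r => E.ι r * (List.ofFn fun j => x j ^ α j).prod with hf
  have hf0 : ∀ α, f α 0 = 0 := by intro α; simp [hf]
  have hfadd : ∀ α (r s : R), f α (r + s) = f α r + f α s := by
    intro α r s; simp [hf, add_mul]
  have hei : (List.ofFn fun j => x j ^ (Pi.single i 1 : Fin n → ℕ) j).prod = x i := by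
    rw [prod_ofFn_eq_of_single (fun j => x j ^ (Pi.single i 1 : Fin n → ℕ) j) i]
    · simp
    · intro j hj; simp [Pi.single_apply, hj]
  have heine : (Pi.single i 1 : Fin n → ℕ) ≠ 0 := by
    intro h
    have := congrFun h i
    simp at this
  -- the canonical representation of `ι a * x i + ι b`
  have hrepsum : ∀ a b : R,
      (Finsupp.single (Pi.single i 1 : Fin n → ℕ) a + Finsupp.single 0 b).sum f
        = E.ι a * x i + E.ι b := by
    intro a b
    rw [Finsupp.sum_add_index' hf0 hfadd, Finsupp.sum_single_index (hf0 _),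
      Finsupp.sum_single_index (hf0 _)]
    simp [hf, hei, prod_ofFn_pow_zero x]
  -- uniqueness of coefficients
  have key : ∀ a b a' b' : R,
      E.ι a * x i + E.ι b = E.ι a' * x i + E.ι b' → a = a' ∧ b = b' := by
    intro a b a' b' h
    obtain ⟨c, hc, huniq⟩ := E.basis (E.ι a * x i + E.ι b)
    have h1 : Finsupp.single (Pi.single i 1 : Fin n → ℕ) a + Finsupp.single 0 b = c :=
      huniq _ (hrepsum a b).symm
    have h2 : Finsupp.single (Pi.single i 1 : Fin n → ℕ) a' + Finsupp.single 0 b' = c :=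
      huniq _ (h.trans (hrepsum a' b').symm)
    have h3 := h1.trans h2.symm
    constructor
    · have := congrArg (fun c => c (Pi.single i 1 : Fin n → ℕ)) h3
      simpa [Finsupp.single_apply, heine, Ne.symm heine] using this
    · have := congrArg (fun c => c (0 : Fin n → ℕ)) h3
      simpa [Finsupp.single_apply, heine, Ne.symm heine] using this
  -- existence of coefficients for every r
  have exrep : ∀ r : R, ∃ a b : R, x i * E.ι r = E.ι a * x i + E.ι b := by
    intro r
    by_cases hr : r = 0
    · exact ⟨0, 0, by simp [hr]⟩
    · obtain ⟨c, _, r', h⟩ := E.cond3 i r hr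
      exact ⟨c, r', h⟩
  choose σ₀ δ hrep using exrep
  have huniq' : ∀ (r a b : R), x i * E.ι r = E.ι a * x i + E.ι b → σ₀ r = a ∧ δ r = b := by
    intro r a b h
    exact key _ _ _ _ ((hrep r).symm.trans h)
  have hone : σ₀ 1 = 1 ∧ δ 1 = 0 := huniq' 1 1 0 (by simp)
  have hmul : ∀ r s : R, σ₀ (r * s) = σ₀ r * σ₀ s ∧ δ (r * s) = σ₀ r * δ s + δ r * s := by
    intro r s
    apply huniq'
    calc x i * E.ι (r * s) = (x i * E.ι r) * E.ι s := by rw [map_mul, mul_assoc]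
      _ = E.ι (σ₀ r) * (x i * E.ι s) + E.ι (δ r) * E.ι s := by
          rw [hrep r]; noncomm_ring
      _ = E.ι (σ₀ r) * (E.ι (σ₀ s) * x i + E.ι (δ s)) + E.ι (δ r) * E.ι s := by rw [hrep s]
      _ = E.ι (σ₀ r * σ₀ s) * x i + E.ι (σ₀ r * δ s + δ r * s) := by
          simp only [map_mul, map_add]; noncomm_ring
  have hadd : ∀ r s : R, σ₀ (r + s) = σ₀ r + σ₀ s ∧ δ (r + s) = δ r + δ s := by
    intro r s
    apply huniq'
    rw [map_add, mul_add, hrep r, hrep s, map_add, map_add]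
    noncomm_ring
  have hzero : σ₀ 0 = 0 ∧ δ 0 = 0 := huniq' 0 0 0 (by simp)
  refine ⟨⟨⟨⟨σ₀, hone.1⟩, fun r s => (hmul r s).1⟩, hzero.1, fun r s => (hadd r s).1⟩, δ,
    ?_, fun r s => (hadd r s).2, fun r s => (hmul r s).2, hrep⟩
  -- injectivity
  intro r s hrs
  by_contra hne
  have hr : r - s ≠ 0 := sub_ne_zero.mpr hne
  obtain ⟨c, hc, r', h⟩ := E.cond3 i (r - s) hr
  have hsc : σ₀ (r - s) = c := (huniq' _ _ _ h).1
  apply hc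
  rw [← hsc]
  have h2 : σ₀ (r - s) + σ₀ s = σ₀ r := by
    have h3 := (hadd (r - s) s).1
    rw [sub_add_cancel] at h3
    exact h3.symm
  have hrs' : σ₀ r = σ₀ s := hrs
  rw [eq_sub_of_add_eq h2, hrs', sub_self]
end

section
/- (Ore's theorem for skew PBW extensions) Let A be a bijective skew PBW extension of a ring R with variables x_1,…,x_n. If R is a left Ore domain, then A is a left Ore domain. -/
/-- The skew PBW extension is *bijective*. -/
def SkewPBWExtension.IsBijective {R A : Type*} [Ring R] [Ring A] {n : ℕ} {x : Fin n → A}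
    (E : SkewPBWExtension R A n x) : Prop :=
  (∀ i : Fin n, ∃ (σ : R ≃+* R) (δ : R → R),
      ∀ r : R, x i * E.ι r = E.ι (σ r) * x i + E.ι (δ r)) ∧
  (∀ i j : Fin n, i < j → ∃ c : Rˣ, ∃ (r0 : R) (r' : Fin n → R),
      x j * x i = E.ι c * (x i * x j) + E.ι r0 + ∑ k, E.ι (r' k) * x k)

/-- A domain `R` is a *left Ore domain* if any two nonzero elements have a nonzero
common left multiple. -/
def IsLeftOreDomain (R : Type*) [Ring R] : Prop :=
  IsDomain R ∧ ∀ a b : R, a ≠ 0 → b ≠ 0 → ∃ u v : R, u * a = v * b ∧ u * a ≠ 0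

/-!
Order the exponents of the standard monomials degree-lexicographically. Since the `σᵢ` are
injective and the `c_{i,j}` are units, `x i * x^α` has leading exponent `α + eᵢ` with a nonzero
coefficient. Hence, over a domain `R`, the leading exponent of a product is the sum of those of
the factors, with a nonzero coefficient, and `A` is a domain.

If nonzero `a, b ∈ A` had no nonzero common left multiple, then `X a + Y b = 0` would force
`X = Y = 0`, so the `2^l` words of length `l` in `a` and `b` would be left linearly independent
over `A`, and in particular over `R`. But they lie in the `R`-span of the `(l D + 1)^n` monomials
of degree at most `l D`, where `D` bounds the degrees of `a` and `b`, and over a left Ore domain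
more than `N` vectors of `R^N` are always left linearly dependent. For large `l` this is a
contradiction, since `2^l` outgrows `(l D + 1)^n`.
-/

theorem IsLeftOreDomain.exists_sum_smul_eq_zero {R : Type*} [Ring R] (hR : IsLeftOreDomain R)
    {ι κ : Type*} (T : Finset κ) (s : Finset ι) (v : ι → κ →₀ R)
    (hv : ∀ i ∈ s, ∀ k ∉ T, v i k = 0) (hcard : T.card < s.card) :
    ∃ c : ι → R, (∃ i ∈ s, c i ≠ 0) ∧ ∑ i ∈ s, c i • v i = 0 := by
  classical
  have := hR.1
  induction T using Finset.induction_on generalizing s v with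
  | empty =>
    obtain ⟨i, hi⟩ := Finset.card_pos.mp hcard
    refine ⟨fun _ => 1, ⟨i, hi, one_ne_zero⟩, Finset.sum_eq_zero fun j hj => ?_⟩
    ext k
    simp [hv j hj k (Finset.notMem_empty k)]
  | insert k T hk ih =>
    rw [Finset.card_insert_of_notMem hk] at hcard
    by_cases h0 : ∀ i ∈ s, v i k = 0
    · refine ih s v (fun i hi l hl => ?_) (by omega)
      rcases eq_or_ne l k with rfl | hlk
      exacts [h0 i hi, hv i hi l (by simp [hl, hlk])]
    push Not at h0
    obtain ⟨i₀, hi₀, hvi₀⟩ := h0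
    -- the Ore condition eliminates the coordinate `k` against `v i₀`
    have hore : ∀ i, ∃ p : R × R, p.1 ≠ 0 ∧ p.1 * v i k = p.2 * v i₀ k := by
      intro i
      by_cases hvi : v i k = 0
      · exact ⟨(1, 0), one_ne_zero, by simp [hvi]⟩
      · obtain ⟨p, q, hpq, hp⟩ := hR.2 _ _ hvi hvi₀
        exact ⟨(p, q), left_ne_zero_of_mul hp, hpq⟩
    choose p hp hpv using hore
    have hw : ∀ i ∈ s.erase i₀, ∀ l ∉ T, ((p i).1 • v i - (p i).2 • v i₀) l = 0 := by
      intro i hi l hl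
      rcases eq_or_ne l k with rfl | hlk
      · simp [hpv]
      · have hl' : l ∉ insert k T := by simp [hl, hlk]
        simp [hv i (Finset.mem_of_mem_erase hi) l hl', hv i₀ hi₀ l hl']
    obtain ⟨c, ⟨i₁, hi₁, hc⟩, hsum⟩ := ih (s.erase i₀) _ hw
      (by rw [Finset.card_erase_of_mem hi₀]; omega)
    refine ⟨Function.update (fun i => c i * (p i).1) i₀ (-∑ i ∈ s.erase i₀, c i * (p i).2),
      ⟨i₁, Finset.mem_of_mem_erase hi₁, ?_⟩, ?_⟩
    · rw [Function.update_of_ne (Finset.ne_of_mem_erase hi₁)]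
      exact mul_ne_zero hc (hp i₁)
    have hrest : ∑ i ∈ s.erase i₀, Function.update (fun i => c i * (p i).1) i₀
        (-∑ i ∈ s.erase i₀, c i * (p i).2) i • v i = ∑ i ∈ s.erase i₀, (c i * (p i).1) • v i :=
      Finset.sum_congr rfl fun i hi => by rw [Function.update_of_ne (Finset.ne_of_mem_erase hi)]
    rw [← Finset.add_sum_erase s _ hi₀, hrest, Function.update_self, neg_smul, neg_add_eq_sub]
    simpa only [smul_sub, ← mul_smul, Finset.sum_sub_distrib, ← Finset.sum_smul] using hsum

open Asymptotics Filter in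
theorem exists_add_one_pow_lt_two_pow (D n : ℕ) : ∃ l : ℕ, (l * D + 1) ^ n < 2 ^ l := by
  have hlin : (fun l : ℕ => (l * D + 1 : ℝ)) =O[atTop] fun l => (l : ℝ) :=
    IsBigO.of_bound (D + 1) <| (eventually_ge_atTop 1).mono fun l hl => by
      have hl : (1 : ℝ) ≤ l := by exact_mod_cast hl
      rw [Real.norm_of_nonneg (by positivity), Real.norm_of_nonneg (by positivity)]
      nlinarith
  obtain ⟨l, hl⟩ := ((hlin.pow n).trans_isLittleO
    (isLittleO_pow_const_const_pow_of_one_lt n one_lt_two)).def one_half_pos |>.exists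
  refine ⟨l, ?_⟩
  rw [norm_pow, norm_pow, Real.norm_of_nonneg (by positivity), Real.norm_two] at hl
  have : (0 : ℝ) < 2 ^ l := by positivity
  exact_mod_cast (show ((l * D + 1 : ℕ) : ℝ) ^ n < 2 ^ l by push_cast; linarith)

section Words

variable {A : Type*} [Ring A]

def word (a b : A) : {l : ℕ} → (Fin l → Bool) → A
  | 0, _ => 1
  | _ + 1, s => word a b (Fin.tail s) * cond (s 0) a b

theorem eq_zero_of_sum_mul_word_eq_zero {a b : A}
    (hab : ∀ X Y : A, X * a + Y * b = 0 → X = 0 ∧ Y = 0) {l : ℕ}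
    (g : (Fin l → Bool) → A) (h : ∑ s, g s * word a b s = 0) : g = 0 := by
  induction l with
  | zero =>
    rw [Fintype.sum_unique] at h
    funext s
    simpa [word, Unique.eq_default s] using h
  | succ l ih =>
    rw [← (Fin.consEquiv fun _ => Bool).sum_comp, Fintype.sum_prod_type, Fintype.sum_bool] at h
    simp only [Fin.consEquiv, Equiv.coe_fn_mk, word, Fin.tail_cons, Fin.cons_zero, cond_true,
      cond_false, ← mul_assoc, ← Finset.sum_mul] at h
    obtain ⟨htrue, hfalse⟩ := hab _ _ h
    funext s
    rw [← Fin.cons_self_tail s]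
    cases s 0
    · exact congrFun (ih _ hfalse) _
    · exact congrFun (ih _ htrue) _

end Words

namespace SkewPBWExtension

variable {R A : Type*} [Ring R] [Ring A] {n : ℕ} {x : Fin n → A}

def degLex : (Fin n → ℕ) →+ ℕ ×ₗ Lex (Fin n → ℕ) where
  toFun γ := toLex (∑ i, γ i, toLex γ)
  map_zero' := by simp
  map_add' a b := by simp only [Pi.add_apply, Finset.sum_add_distrib]; rfl

lemma degLex_injective : Function.Injective (degLex (n := n)) :=
  fun _ _ h => congrArg (fun k : ℕ ×ₗ Lex (Fin n → ℕ) => ofLex (ofLex k).2) h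

lemma degLex_lt_degLex_of_sum_lt {a b : Fin n → ℕ} (h : ∑ i, a i < ∑ i, b i) :
    degLex a < degLex b :=
  Prod.Lex.lt_iff.mpr (Or.inl h)

lemma sum_le_sum_of_degLex_le {a b : Fin n → ℕ} (h : degLex a ≤ degLex b) :
    ∑ i, a i ≤ ∑ i, b i := by
  rcases Prod.Lex.le_iff.mp h with h | ⟨h, -⟩
  exacts [h.le, h.le]

lemma degLex_add_lt_degLex_add {a b : Fin n → ℕ} (h : degLex a < degLex b) (c : Fin n → ℕ) :
    degLex (a + c) < degLex (b + c) := by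
  simpa only [map_add] using add_lt_add_of_lt_of_le h le_rfl

lemma sum_add_single (γ : Fin n → ℕ) (i : Fin n) :
    ∑ k, (γ + Pi.single i 1 : Fin n → ℕ) k = ∑ k, γ k + 1 := by
  simp [Finset.sum_add_distrib]

lemma degLex_lt_degLex_add_single (γ : Fin n → ℕ) (i : Fin n) :
    degLex γ < degLex (γ + Pi.single i 1) :=
  degLex_lt_degLex_of_sum_lt (by simp [Finset.sum_add_distrib])

variable (x) in
def stdMonomial (α : Fin n → ℕ) : A :=
  (List.ofFn fun i => x i ^ α i).prod

@[simp]
lemma stdMonomial_zero : stdMonomial x 0 = 1 :=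
  List.prod_eq_one (by simp)

lemma mul_stdMonomial {m : ℕ} {y : Fin m → A} {α : Fin m → ℕ} {j : Fin m}
    (h : ∀ k < j, α k = 0) : y j * stdMonomial y α = stdMonomial y (α + Pi.single j 1) := by
  induction m with
  | zero => exact j.elim0
  | succ m ih =>
    simp only [stdMonomial, List.ofFn_succ, List.prod_cons, Pi.add_apply] at ih ⊢
    induction j using Fin.cases with
    | zero => simp [pow_succ', mul_assoc, Fin.succ_ne_zero]
    | succ j =>
      have ih' := ih (y := fun k => y k.succ) (α := fun k => α k.succ) (j := j)
        (fun k hk => h k.succ (Fin.succ_lt_succ_iff.mpr hk))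
      simp only [h 0 (Fin.succ_pos j), Pi.single_apply, (Fin.succ_ne_zero j).symm, if_false,
        pow_zero, one_mul, add_zero, Fin.succ_inj] at ih' ⊢
      exact ih'

@[simp]
lemma stdMonomial_single (i : Fin n) : stdMonomial x (Pi.single i 1) = x i := by
  simpa using (mul_stdMonomial (y := x) (α := 0) (j := i) fun _ _ => rfl).symm

lemma exists_eq_add_single {α : Fin n → ℕ} (hα : α ≠ 0) :
    ∃ (j : Fin n) (α' : Fin n → ℕ), α = α' + Pi.single j 1 ∧ ∀ k < j, α k = 0 := by
  obtain ⟨j, hj, hmin⟩ := WellFounded.has_min wellFounded_lt {k | α k ≠ 0}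
    (Function.ne_iff.mp hα)
  refine ⟨j, Function.update α j (α j - 1), funext fun k => ?_,
    fun k hk => not_not.mp fun h => hmin k h hk⟩
  rcases eq_or_ne k j with rfl | hk
  · simp only [Pi.add_apply, Function.update_self, Pi.single_eq_same]
    exact (Nat.sub_add_cancel (Nat.one_le_iff_ne_zero.mpr hj)).symm
  · simp [hk]

section Coefficients

variable (E : SkewPBWExtension R A n x)

noncomputable def sumCoeff : ((Fin n → ℕ) →₀ R) →+ A :=
  Finsupp.liftAddHom fun α => (AddMonoidHom.mulRight (stdMonomial x α)).comp E.ι.toAddMonoidHom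

lemma sumCoeff_apply (c : (Fin n → ℕ) →₀ R) :
    E.sumCoeff c = c.sum fun α r => E.ι r * stdMonomial x α :=
  Finsupp.liftAddHom_apply _ _

lemma sumCoeff_bijective : Function.Bijective E.sumCoeff :=
  (Function.bijective_iff_existsUnique _).mpr fun a => by
    simpa only [sumCoeff_apply, eq_comm, stdMonomial] using E.basis a

noncomputable def coeff : A ≃+ ((Fin n → ℕ) →₀ R) :=
  (AddEquiv.ofBijective E.sumCoeff E.sumCoeff_bijective).symm

lemma coeff_symm_apply (c : (Fin n → ℕ) →₀ R) : E.coeff.symm c = E.sumCoeff c := rfl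

lemma sum_coeff (a : A) : ((E.coeff a).sum fun α r => E.ι r * stdMonomial x α) = a := by
  rw [← sumCoeff_apply, ← coeff_symm_apply, AddEquiv.symm_apply_apply]

lemma sumCoeff_smul (r : R) (c : (Fin n → ℕ) →₀ R) :
    E.sumCoeff (r • c) = E.ι r * E.sumCoeff c := by
  simp only [sumCoeff_apply, Finsupp.sum_smul_index, zero_mul, map_zero, implies_true,
    Finsupp.mul_sum, map_mul, mul_assoc]

lemma coeff_ι_mul (r : R) (a : A) : E.coeff (E.ι r * a) = r • E.coeff a := by
  rw [← AddEquiv.eq_symm_apply, coeff_symm_apply, sumCoeff_smul, ← coeff_symm_apply,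
    AddEquiv.symm_apply_apply]

lemma coeff_stdMonomial (α : Fin n → ℕ) : E.coeff (stdMonomial x α) = Finsupp.single α 1 := by
  rw [← AddEquiv.eq_symm_apply, coeff_symm_apply, sumCoeff_apply,
    Finsupp.sum_single_index (by simp), map_one, one_mul]

end Coefficients


section TopCoeff

variable (E : SkewPBWExtension R A n x)

/-- `t` may be `0`: this bounds the support of `u`, and is a leading term only when `t ≠ 0`. -/
def TopCoeff (u : A) (γ : Fin n → ℕ) (t : R) : Prop :=
  E.coeff u γ = t ∧ ∀ β, degLex γ < degLex β → E.coeff u β = 0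

variable {E} {u v : A} {γ : Fin n → ℕ} {t s : R}

lemma TopCoeff.add (hu : E.TopCoeff u γ t) (hv : E.TopCoeff v γ s) :
    E.TopCoeff (u + v) γ (t + s) :=
  ⟨by simp [hu.1, hv.1], fun β hβ => by simp [hu.2 β hβ, hv.2 β hβ]⟩

lemma TopCoeff.ι_mul (hu : E.TopCoeff u γ t) (r : R) : E.TopCoeff (E.ι r * u) γ (r * t) :=
  ⟨by simp [coeff_ι_mul, hu.1], fun β hβ => by simp [coeff_ι_mul, hu.2 β hβ]⟩

lemma TopCoeff.sum {ι : Type*} (s : Finset ι) {f : ι → A} {g : ι → R}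
    (h : ∀ i ∈ s, E.TopCoeff (f i) γ (g i)) :
    E.TopCoeff (∑ i ∈ s, f i) γ (∑ i ∈ s, g i) := by
  refine ⟨?_, fun β hβ => ?_⟩ <;> rw [map_sum, Finsupp.finsetSum_apply]
  · exact Finset.sum_congr rfl fun i hi => (h i hi).1
  · exact Finset.sum_eq_zero fun i hi => (h i hi).2 β hβ

lemma TopCoeff.of_lt {γ' : Fin n → ℕ} (hu : E.TopCoeff u γ t) (h : degLex γ < degLex γ') :
    E.TopCoeff u γ' 0 :=
  ⟨hu.2 γ' h, fun β hβ => hu.2 β (h.trans hβ)⟩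

lemma TopCoeff.degLex_le (hu : E.TopCoeff u γ t) {β : Fin n → ℕ} (hβ : E.coeff u β ≠ 0) :
    degLex β ≤ degLex γ :=
  not_lt.mp fun h => hβ (hu.2 β h)

lemma topCoeff_stdMonomial (α : Fin n → ℕ) : E.TopCoeff (stdMonomial x α) α 1 := by
  refine ⟨by simp [coeff_stdMonomial], fun β hβ => ?_⟩
  rw [coeff_stdMonomial, Finsupp.single_eq_of_ne]
  exact fun h => hβ.ne (congrArg degLex h.symm)

lemma exists_topCoeff (hu : u ≠ 0) : ∃ γ t, t ≠ 0 ∧ E.TopCoeff u γ t := by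
  have hsupp : (E.coeff u).support.Nonempty := by simpa using hu
  obtain ⟨γ, hγ, hmax⟩ := (E.coeff u).support.exists_max_image degLex hsupp
  exact ⟨γ, _, Finsupp.mem_support_iff.mp hγ, rfl, fun β hβ =>
    Finsupp.notMem_support_iff.mp fun h => (hmax β h).not_gt hβ⟩

lemma TopCoeff.sum_coeff {κ : Fin n → ℕ} (hu : E.TopCoeff u κ t) (ht : t ≠ 0)
    (F : (Fin n → ℕ) → R → A) (hκ : E.TopCoeff (F κ t) γ s)
    (hlt : ∀ α, degLex α < degLex κ → E.TopCoeff (F α (E.coeff u α)) γ 0) :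
    E.TopCoeff ((E.coeff u).sum F) γ s := by
  classical
  have hκmem : κ ∈ (E.coeff u).support := by simpa [hu.1] using ht
  have hrest : E.TopCoeff (∑ α ∈ (E.coeff u).support.erase κ, F α (E.coeff u α)) γ
      (∑ _α ∈ (E.coeff u).support.erase κ, 0) := by
    refine TopCoeff.sum _ fun α hα => hlt α ?_
    obtain ⟨hακ, hα⟩ := Finset.mem_erase.mp hα
    exact (hu.degLex_le (Finsupp.mem_support_iff.mp hα)).lt_of_ne
      (degLex_injective.ne hακ)
  rw [Finsupp.sum, ← Finset.add_sum_erase _ _ hκmem, hu.1]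
  simpa using hκ.add hrest

end TopCoeff

section Multiplication

variable {E : SkewPBWExtension R A n x} [IsDomain R] {b : A} {κ : Fin n → ℕ} {t : R}

lemma TopCoeff.x_mul_of_forall (hE : E.IsBijective) (i : Fin n) (hb : E.TopCoeff b κ t)
    (ht : t ≠ 0)
    (H : ∀ β, degLex β ≤ degLex κ →
      ∃ c ≠ 0, E.TopCoeff (x i * stdMonomial x β) (β + Pi.single i 1) c) :
    ∃ s ≠ 0, E.TopCoeff (x i * b) (κ + Pi.single i 1) s := by
  obtain ⟨σ, δ, hσ⟩ := hE.1 i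
  have hF : ∀ α r c, E.TopCoeff (x i * stdMonomial x α) (α + Pi.single i 1) c →
      E.TopCoeff (x i * (E.ι r * stdMonomial x α)) (α + Pi.single i 1) (σ r * c) := by
    intro α r c h
    rw [← mul_assoc, hσ, add_mul, mul_assoc]
    simpa using (h.ι_mul (σ r)).add
      (((topCoeff_stdMonomial α).ι_mul (δ r)).of_lt (degLex_lt_degLex_add_single α i))
  obtain ⟨c, hc, hκ⟩ := H κ le_rfl
  refine ⟨σ t * c, mul_ne_zero ((map_ne_zero_iff σ σ.injective).mpr ht) hc, ?_⟩
  rw [← E.sum_coeff b, Finsupp.mul_sum]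
  refine hb.sum_coeff ht _ (hF κ t c hκ) fun α hα => ?_
  obtain ⟨cα, -, hcα⟩ := H α hα.le
  exact (hF α _ cα hcα).of_lt (degLex_add_lt_degLex_add hα _)

lemma topCoeff_x_mul_x_mul_stdMonomial_of_lt (hE : E.IsBijective) {i j : Fin n} (hji : j < i)
    {α : Fin n → ℕ}
    (hi : ∃ c ≠ 0, E.TopCoeff (x i * stdMonomial x α) (α + Pi.single i 1) c)
    (hk : ∀ k, ∃ c, E.TopCoeff (x k * stdMonomial x α) (α + Pi.single k 1) c)
    (hj : ∀ β, ∑ k, β k ≤ ∑ k, α k + 1 →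
      ∃ c ≠ 0, E.TopCoeff (x j * stdMonomial x β) (β + Pi.single j 1) c) :
    ∃ c ≠ 0, E.TopCoeff (x i * (x j * stdMonomial x α)) (α + Pi.single j 1 + Pi.single i 1) c := by
  obtain ⟨u, r₀, r, hcomm⟩ := hE.2 j i hji
  obtain ⟨c, hc, hci⟩ := hi
  obtain ⟨s, hs, hcj⟩ := hci.x_mul_of_forall hE j hc fun β hβ =>
    hj β (by simpa only [sum_add_single] using sum_le_sum_of_degLex_le hβ)
  have hlt : ∀ β, ∑ k, β k ≤ ∑ k, α k + 1 →
      degLex β < degLex (α + Pi.single j 1 + Pi.single i 1) :=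
    fun β hβ => degLex_lt_degLex_of_sum_lt (by simp only [sum_add_single]; omega)
  have h₀ : E.TopCoeff (E.ι r₀ * stdMonomial x α) (α + Pi.single j 1 + Pi.single i 1) 0 :=
    ((topCoeff_stdMonomial α).ι_mul r₀).of_lt (hlt α (by omega))
  have hsum : E.TopCoeff (∑ k, E.ι (r k) * (x k * stdMonomial x α))
      (α + Pi.single j 1 + Pi.single i 1) (∑ _k : Fin n, 0) :=
    TopCoeff.sum _ fun k _ => by
      obtain ⟨ck, hck⟩ := hk k
      simpa using (hck.ι_mul (r k)).of_lt (hlt _ (by simp only [sum_add_single]; rfl))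
  refine ⟨u * s, (Units.mul_right_eq_zero u).not.mpr hs, ?_⟩
  rw [← mul_assoc, hcomm, add_mul, add_mul, Finset.sum_mul, mul_assoc, mul_assoc]
  rw [add_right_comm] at hcj
  simpa [mul_assoc] using ((hcj.ι_mul u).add h₀).add hsum

/-- Induction on `n * deg α + i`: commuting `x i` past the least variable `x j` of `x^α` (with
`j < i`) only produces terms that are smaller for this measure. -/
lemma topCoeff_x_mul_stdMonomial (hE : E.IsBijective) (i : Fin n) (α : Fin n → ℕ) :
    ∃ c ≠ 0, E.TopCoeff (x i * stdMonomial x α) (α + Pi.single i 1) c := by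
  induction hN : (∑ k, α k) * n + i using Nat.strong_induction_on generalizing i α with
  | _ N ih =>
  rcases eq_or_ne α 0 with rfl | hα
  · exact ⟨1, one_ne_zero, by simpa using topCoeff_stdMonomial (E := E) (Pi.single i 1)⟩
  obtain ⟨j, α, rfl, hlow⟩ := exists_eq_add_single hα
  rcases le_or_gt i j with hij | hji
  · rw [mul_stdMonomial fun k hk => hlow k (hk.trans_le hij)]
    exact ⟨1, one_ne_zero, topCoeff_stdMonomial _⟩
  have hlow' : ∀ k < j, α k = 0 := fun k hk => by simpa [hk.ne] using hlow k hk
  have hdeg : (∑ k, α k) * n + n ≤ (∑ k, (α + Pi.single j 1 : Fin n → ℕ) k) * n := by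
    simp only [sum_add_single, add_mul, one_mul, le_refl]
  rw [← mul_stdMonomial hlow']
  refine topCoeff_x_mul_x_mul_stdMonomial_of_lt hE hji (ih _ (by omega) i α rfl)
    (fun k => (ih _ (by omega) k α rfl).imp fun _ => And.right) fun β hβ => ih _ ?_ j β rfl
  have := Nat.mul_le_mul_right n hβ
  simp only [sum_add_single] at hdeg hN ⊢
  omega

lemma TopCoeff.x_mul (hE : E.IsBijective) (i : Fin n) (hb : E.TopCoeff b κ t) (ht : t ≠ 0) :
    ∃ s ≠ 0, E.TopCoeff (x i * b) (κ + Pi.single i 1) s :=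
  hb.x_mul_of_forall hE i ht fun β _ => topCoeff_x_mul_stdMonomial hE i β

lemma TopCoeff.stdMonomial_mul (hE : E.IsBijective) (α : Fin n → ℕ) (hb : E.TopCoeff b κ t)
    (ht : t ≠ 0) : ∃ s ≠ 0, E.TopCoeff (stdMonomial x α * b) (α + κ) s := by
  induction hN : ∑ k, α k generalizing α with
  | zero =>
    obtain rfl : α = 0 := funext fun k => Finset.sum_eq_zero_iff.mp hN k (Finset.mem_univ k)
    exact ⟨t, ht, by simpa using hb⟩
  | succ N ih =>
    obtain ⟨j, α, rfl, hlow⟩ := exists_eq_add_single (α := α) (by rintro rfl; simp at hN)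
    have hlow' : ∀ k < j, α k = 0 := fun k hk => by simpa [hk.ne] using hlow k hk
    obtain ⟨s, hs, hα⟩ := ih α (by simp only [sum_add_single] at hN; omega)
    rw [← mul_stdMonomial hlow', mul_assoc, add_right_comm]
    exact hα.x_mul hE j hs

lemma TopCoeff.mul (hE : E.IsBijective) {a : A} {κa : Fin n → ℕ} {ta : R}
    (ha : E.TopCoeff a κa ta) (hta : ta ≠ 0) (hb : E.TopCoeff b κ t) (ht : t ≠ 0) :
    ∃ s ≠ 0, E.TopCoeff (a * b) (κa + κ) s := by
  obtain ⟨s, hs, hκ⟩ := hb.stdMonomial_mul hE κa ht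
  refine ⟨ta * s, mul_ne_zero hta hs, ?_⟩
  rw [← E.sum_coeff a, Finsupp.sum_mul]
  refine ha.sum_coeff hta _ (by simpa [mul_assoc] using hκ.ι_mul ta) fun α hα => ?_
  obtain ⟨sα, -, hsα⟩ := hb.stdMonomial_mul hE α ht
  simpa [mul_assoc] using (hsα.ι_mul _).of_lt (degLex_add_lt_degLex_add hα κ)

theorem isDomain (hE : E.IsBijective) : IsDomain A := by
  have : Nontrivial A := ⟨1, 0, fun h => by
    have := congrArg E.coeff ((stdMonomial_zero (x := x)).trans h)
    rw [coeff_stdMonomial, map_zero, Finsupp.single_eq_zero] at this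
    exact one_ne_zero this⟩
  have : NoZeroDivisors A := ⟨fun {a b} hab => by
    by_contra! h
    obtain ⟨κa, ta, hta, ha⟩ := exists_topCoeff (E := E) h.1
    obtain ⟨κb, tb, htb, hb⟩ := exists_topCoeff (E := E) h.2
    obtain ⟨s, hs, hab'⟩ := ha.mul hE hta hb htb
    simp [← hab'.1, hab] at hs⟩
  exact NoZeroDivisors.to_isDomain A

end Multiplication

lemma exists_sum_ι_mul_eq_zero (E : SkewPBWExtension R A n x) (hR : IsLeftOreDomain R)
    {ι : Type*} [Fintype ι] (u : ι → A) (m : ℕ)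
    (hu : ∀ i β, m < ∑ k, β k → E.coeff (u i) β = 0) (hcard : (m + 1) ^ n < Fintype.card ι) :
    ∃ c : ι → R, c ≠ 0 ∧ ∑ i, E.ι (c i) * u i = 0 := by
  classical
  set T := Fintype.piFinset fun _ : Fin n => Finset.range (m + 1)
  have hT : ∀ i ∈ Finset.univ, ∀ β ∉ T, E.coeff (u i) β = 0 := by
    intro i _ β hβ
    obtain ⟨k, hk⟩ : ∃ k, m < β k := by simpa [T, Fintype.mem_piFinset, Nat.lt_succ_iff] using hβ
    exact hu i β (hk.trans_le (Finset.single_le_sum (fun _ _ => Nat.zero_le _) (Finset.mem_univ k)))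
  obtain ⟨c, ⟨i, -, hi⟩, hc⟩ := hR.exists_sum_smul_eq_zero T Finset.univ _ hT
    (by simpa [T, Fintype.card_piFinset] using hcard)
  refine ⟨c, Function.ne_iff.mpr ⟨i, hi⟩, E.coeff.injective ?_⟩
  simpa [coeff_ι_mul] using hc

section Words

variable {E : SkewPBWExtension R A n x} [IsDomain R]

lemma exists_topCoeff_word (hE : E.IsBijective) {a b : A} {κa κb : Fin n → ℕ} {ta tb : R}
    (ha : E.TopCoeff a κa ta) (hta : ta ≠ 0) (hb : E.TopCoeff b κb tb) (htb : tb ≠ 0) :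
    ∀ {l : ℕ} (s : Fin l → Bool), ∃ γ t, t ≠ 0 ∧ E.TopCoeff (word a b s) γ t ∧
      ∑ k, γ k ≤ l * max (∑ k, κa k) (∑ k, κb k)
  | 0, _ => ⟨0, 1, one_ne_zero, by simpa [word] using topCoeff_stdMonomial (E := E) 0, by simp⟩
  | l + 1, s => by
    obtain ⟨γ, t, ht, hγ, hdeg⟩ := exists_topCoeff_word hE ha hta hb htb (Fin.tail s)
    simp only [word, add_mul, one_mul]
    cases s 0
    · obtain ⟨t', ht', h'⟩ := hγ.mul hE ht hb htb
      exact ⟨γ + κb, t', ht', h', by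
        simpa [Finset.sum_add_distrib] using add_le_add hdeg (le_max_right _ _)⟩
    · obtain ⟨t', ht', h'⟩ := hγ.mul hE ht ha hta
      exact ⟨γ + κa, t', ht', h', by
        simpa [Finset.sum_add_distrib] using add_le_add hdeg (le_max_left _ _)⟩

lemma exists_coeff_word_eq_zero (hE : E.IsBijective) {a b : A} (ha : a ≠ 0) (hb : b ≠ 0) :
    ∃ D, ∀ l (s : Fin l → Bool) β, l * D < ∑ k, β k → E.coeff (word a b s) β = 0 := by
  obtain ⟨κa, ta, hta, ha⟩ := exists_topCoeff (E := E) ha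
  obtain ⟨κb, tb, htb, hb⟩ := exists_topCoeff (E := E) hb
  refine ⟨max (∑ k, κa k) (∑ k, κb k), fun l s β hβ => ?_⟩
  obtain ⟨γ, t, -, hγ, hdeg⟩ := exists_topCoeff_word hE ha hta hb htb s
  by_contra h
  exact hβ.not_ge ((sum_le_sum_of_degLex_le (hγ.degLex_le h)).trans hdeg)

end Words


end SkewPBWExtension

/-- (Ore's theorem) If `A` is a bijective skew PBW extension of a left Ore domain `R`,
then `A` is a left Ore domain. -/
theorem skewPBWExtension_isLeftOreDomain {R A : Type*} [Ring R] [Ring A] {n : ℕ}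
    {x : Fin n → A} (E : SkewPBWExtension R A n x) (hbij : E.IsBijective)
    (hR : IsLeftOreDomain R) : IsLeftOreDomain A := by
  have := hR.1
  have hA := E.isDomain hbij
  refine ⟨hA, fun a b ha hb => ?_⟩
  by_contra! hab
  have hindep : ∀ X Y : A, X * a + Y * b = 0 → X = 0 ∧ Y = 0 := by
    intro X Y h
    have hX : X = 0 := (mul_eq_zero.mp (hab X (-Y) (by
      rw [neg_mul, eq_neg_iff_add_eq_zero, h]))).resolve_right ha
    exact ⟨hX, (mul_eq_zero.mp (by simpa [hX] using h)).resolve_right hb⟩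
  obtain ⟨D, hD⟩ := SkewPBWExtension.exists_coeff_word_eq_zero hbij ha hb
  obtain ⟨l, hl⟩ := exists_add_one_pow_lt_two_pow D n
  obtain ⟨c, hc, hsum⟩ := E.exists_sum_ι_mul_eq_zero hR (word a b) (l * D) (hD l)
    (by simpa using hl)
  refine hc (funext fun s => E.ι_injective ?_)
  simpa using congrFun (eq_zero_of_sum_mul_word_eq_zero hindep _ hsum) s
end

section
/- Let B be a finitely semi-graded (FSG) ring such that B_0 is a left noetherian domain, and let V be a generating frame of B. Then GGKdim(B) = limsup_{k→∞} log_k(udim V^k); in particular, this value is the same for every generating frame V of B. -/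
open scoped DirectSum

/-- A ring `B` is *semi-graded (SG)*. -/
structure SemiGraded (B : Type*) [Ring B] where
  comp : ℕ → AddSubgroup B
  internal : DirectSum.IsInternal comp
  mul_mem : ∀ m n : ℕ, ∀ a ∈ comp m, ∀ b ∈ comp n, a * b ∈ ⨆ k ∈ Set.Iic (m + n), comp k
  one_mem' : 1 ∈ comp 0

/-- `v : Fin k → B` is a basis of the free left `B_0`-module `B_n`. -/
def SemiGraded.IsComp0Basis {B : Type*} [Ring B] (SG : SemiGraded B) (n : ℕ) {k : ℕ}
    (v : Fin k → B) : Prop :=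
  (∀ i, v i ∈ SG.comp n) ∧
  ∀ b ∈ SG.comp n, ∃! c : Fin k → B, (∀ i, c i ∈ SG.comp 0) ∧ b = ∑ i, c i * v i

/-- A *finitely semi-graded (FSG)* ring. -/
structure FinitelySemiGraded (B : Type*) [Ring B] extends SemiGraded B where
  fin_gen : ∃ s : Finset B, Subring.closure ((comp 0 : Set B) ∪ s) = ⊤
  free : ∀ n : ℕ, ∃ (k : ℕ) (v : Fin k → B), toSemiGraded.IsComp0Basis n v

variable {B : Type*} [Ring B]

/-- An additive subgroup of `B` which is stable under left multiplication by `B_0`,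
i.e. a left `B_0`-submodule of `B`. -/
def SemiGraded.IsB0Stable (SG : SemiGraded B) (W : AddSubgroup B) : Prop :=
  ∀ c ∈ SG.comp 0, ∀ w ∈ W, c * w ∈ W

/-- The left `B_0`-submodule of `B` generated by a set `s`. -/
def SemiGraded.b0Span (SG : SemiGraded B) (s : Set B) : AddSubgroup B :=
  AddSubgroup.closure {y : B | ∃ c ∈ SG.comp 0, ∃ w ∈ s, y = c * w}

/-- The tuple `v` spans a *frame* of `B`: a finitely generated free left `B_0`-submodule
`V ⊆ B` with basis `v` and `1 ∈ V`. -/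
def SemiGraded.IsFrame (SG : SemiGraded B) {k : ℕ} (v : Fin k → B) : Prop :=
  (∀ c c' : Fin k → B, (∀ i, c i ∈ SG.comp 0) → (∀ i, c' i ∈ SG.comp 0) →
    ∑ i, c i * v i = ∑ i, c' i * v i → c = c') ∧
  (1 : B) ∈ SG.b0Span (Set.range v)

/-- `V^m`: the left `B_0`-submodule of `B` generated by all products of `m` elements
of the frame `V` spanned by `v`. -/
def SemiGraded.framePow (SG : SemiGraded B) {k : ℕ} (v : Fin k → B) (m : ℕ) :
    AddSubgroup B :=
  SG.b0Span {y : B | ∃ w : Fin m → B,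
    (∀ j, w j ∈ SG.b0Span (Set.range v)) ∧ y = (List.ofFn w).prod}

/-- The uniform (Goldie) dimension of a left `B_0`-submodule `W` of `B`: the supremum of
the integers `m` such that `W` contains a direct sum of `m` nonzero `B_0`-submodules. -/
noncomputable def SemiGraded.udim (SG : SemiGraded B) (W : AddSubgroup B) : ℕ :=
  sSup {m : ℕ | ∃ f : Fin m → AddSubgroup B, (∀ i, f i ≠ ⊥) ∧ (∀ i, f i ≤ W) ∧
    (∀ i, SG.IsB0Stable (f i)) ∧ iSupIndep f}

/-- The generalized Gelfand-Kirillov dimension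
`GGKdim(B) = sup_V limsup_{m→∞} log_m (udim V^m)`, the supremum over all frames `V`. -/
noncomputable def SemiGraded.GGKdim (SG : SemiGraded B) : EReal :=
  ⨆ (k : ℕ) (v : Fin k → B) (_ : SG.IsFrame v),
    Filter.limsup (fun m : ℕ => ((Real.logb m (SG.udim (SG.framePow v m)) : ℝ) : EReal))
      Filter.atTop

/-!
Since `V` generates `B` and `1 ∈ V`, every frame `W` lies in some `V^p`, so `W^m ⊆ V^{pm}`, and
`log_m udim(V^{pm}) = log_{pm} udim(V^{pm}) · log(pm) / log m` with the last factor tending to `1`: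
no frame grows faster than `V`.

Comparing uniform dimensions needs them finite. `V^n` lies in the finitely generated, hence
noetherian, `B₀`-module `B₀ ⊕ ⋯ ⊕ B_{dn}`, and a modular lattice with the ascending chain condition
has finite uniform dimension: it contains a finite independent family of uniform elements whose
join is essential, and exchanging the members of any independent family of nonzero elements one by
one against members of that family bounds its size.
-/

section UniformDimension

variable {α : Type*} [CompleteLattice α]

def IsUniform (u : α) : Prop :=
  u ≠ ⊥ ∧ ∀ x ≤ u, ∀ y ≤ u, Disjoint x y → x = ⊥ ∨ y = ⊥

def IsEssentialIn (a b : α) : Prop :=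
  a ≤ b ∧ ∀ x ≤ b, Disjoint x a → x = ⊥

theorem IsEssentialIn.trans {a b c : α} (hab : IsEssentialIn a b) (hbc : IsEssentialIn b c) :
    IsEssentialIn a c :=
  ⟨hab.1.trans hbc.1, fun x hx hxa =>
    hbc.2 x hx (disjoint_iff.2 (hab.2 _ inf_le_right (hxa.mono_left inf_le_left)))⟩

theorem IsEssentialIn.mono_left {a a' b : α} (h : IsEssentialIn a b) (ha : a ≤ a') (hb : a' ≤ b) :
    IsEssentialIn a' b :=
  ⟨hb, fun x hx hxa => h.2 x hx (hxa.mono_right ha)⟩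

theorem IsUniform.isEssentialIn_inf {u c : α} (hu : IsUniform u) (hc : ¬Disjoint u c) :
    IsEssentialIn (c ⊓ u) u :=
  ⟨inf_le_right, fun x hx hxc => (hu.2 x hx _ inf_le_right hxc).resolve_right
    fun h => hc (disjoint_iff.2 (by rw [inf_comm, h]))⟩

variable [IsModularLattice α]

theorem IsEssentialIn.sup_right {a b : α} (h : IsEssentialIn a b) {c : α} (hbc : Disjoint b c) :
    IsEssentialIn (a ⊔ c) (b ⊔ c) := by
  refine ⟨sup_le_sup_right h.1 c, fun x hx hxa => ?_⟩
  -- By modularity `(c ⊔ x) ⊓ (a ⊔ c) = c`, so `(c ⊔ x) ⊓ b` misses `a` and vanishes; then `x ≤ c`.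
  have hxc : (c ⊔ x) ⊓ (a ⊔ c) = c := by
    rw [sup_inf_assoc_of_le x le_sup_right, hxa.eq_bot, sup_bot_eq]
  have hb : (c ⊔ x) ⊓ b = ⊥ := by
    refine h.2 _ inf_le_right (disjoint_iff.2 (le_bot_iff.1 ?_))
    calc (c ⊔ x) ⊓ b ⊓ a ≤ b ⊓ c := le_inf (inf_le_left.trans inf_le_right)
          ((le_inf (inf_le_left.trans inf_le_left) (inf_le_right.trans le_sup_left)).trans hxc.le)
      _ = ⊥ := hbc.eq_bot
  have hxc' : x ≤ c := calc
    x ≤ (c ⊔ b) ⊓ (c ⊔ x) := le_inf (hx.trans_eq (sup_comm b c)) le_sup_right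
    _ = c := by rw [sup_inf_assoc_of_le b le_sup_left, inf_comm, hb, sup_bot_eq]
  exact hxa.eq_bot_of_le (hxc'.trans le_sup_right)

theorem IsEssentialIn.sup {a b a' b' : α} (h : IsEssentialIn a b) (h' : IsEssentialIn a' b')
    (hd : Disjoint b b') : IsEssentialIn (a ⊔ a') (b ⊔ b') := by
  have h₁ : IsEssentialIn (a ⊔ a') (b ⊔ a') := h.sup_right (hd.mono_right h'.1)
  have h₂ : IsEssentialIn (a' ⊔ b) (b' ⊔ b) := h'.sup_right hd.symm
  rw [sup_comm a', sup_comm b'] at h₂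
  exact h₁.trans h₂

theorem IsEssentialIn.finset_sup {ι : Type*} {s : Finset ι} {f g : ι → α} (hs : s.SupIndep g)
    (h : ∀ i ∈ s, IsEssentialIn (f i) (g i)) : IsEssentialIn (s.sup f) (s.sup g) := by
  classical
  induction s using Finset.induction_on with
  | empty => exact ⟨le_rfl, fun x hx _ => le_bot_iff.1 hx⟩
  | insert i s hi ih =>
    rw [Finset.sup_insert, Finset.sup_insert]
    refine (h i (s.mem_insert_self i)).sup (ih (hs.subset (s.subset_insert i))
      fun j hj => h j (Finset.mem_insert_of_mem hj)) ?_
    exact hs (s.subset_insert i) (s.mem_insert_self i) hi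

theorem exists_disjoint_of_isEssentialIn_top {s : Finset α} (hs : s.SupIndep id)
    (hu : ∀ u ∈ s, IsUniform u) (he : IsEssentialIn (s.sup id) ⊤) {x c : α} (hx : x ≠ ⊥)
    (hxc : Disjoint x c) : ∃ u ∈ s, Disjoint u c := by
  by_contra! h
  have hc : IsEssentialIn (s.sup fun u => c ⊓ u) ⊤ :=
    (IsEssentialIn.finset_sup hs fun u hu' => (hu u hu').isEssentialIn_inf (h u hu')).trans he
  exact hx ((hc.mono_left (Finset.sup_le fun u _ => inf_le_left) le_top).2 x le_top hxc)

theorem card_le_card_of_isEssentialIn_top {s : Finset α} (hs : s.SupIndep id)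
    (hu : ∀ u ∈ s, IsUniform u) (he : IsEssentialIn (s.sup id) ⊤) {t : Finset α}
    (ht : t.SupIndep id) (hbot : ⊥ ∉ t) : t.card ≤ s.card := by
  classical
  induction hn : (t \ s).card generalizing t with
  | zero =>
    rw [Finset.card_eq_zero, Finset.sdiff_eq_empty_iff_subset] at hn
    exact Finset.card_le_card hn
  | succ n ih =>
    obtain ⟨x, hx⟩ : (t \ s).Nonempty := Finset.card_pos.1 (by omega)
    rw [Finset.mem_sdiff] at hx
    have hxc : Disjoint x ((t.erase x).sup id) :=
      ht (t.erase_subset x) hx.1 (t.notMem_erase x)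
    obtain ⟨u, hus, huc⟩ :=
      exists_disjoint_of_isEssentialIn_top hs hu he (ne_of_mem_of_not_mem hx.1 hbot) hxc
    have hut : u ∉ t.erase x := fun h => (hu u hus).1 (huc.eq_bot_of_le (Finset.le_sup (f := id) h))
    have key := ih (t := insert u (t.erase x)) ((ht.subset (t.erase_subset x)).insert huc)
      (fun h => (Finset.mem_insert.1 h).elim (fun h' => (hu u hus).1 h'.symm)
        fun h' => hbot (Finset.mem_of_mem_erase h')) ?_
    · rwa [Finset.card_insert_of_notMem hut, Finset.card_erase_add_one hx.1] at key
    · have : insert u (t.erase x) \ s = (t \ s).erase x := by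
        ext y; by_cases hy : y = u <;> aesop
      rw [this, Finset.card_erase_of_mem (Finset.mem_sdiff.2 hx), hn, Nat.add_sub_cancel]

variable [WellFoundedGT α]

theorem exists_isUniform_le {a : α} (ha : a ≠ ⊥) : ∃ u ≤ a, IsUniform u := by
  by_contra! h
  -- Take `y` maximal among the elements disjoint from some nonzero `z ≤ a`. As `z` is not uniform,
  -- it contains disjoint nonzero `z₁, z₂`; by modularity `(y ⊔ z₁) ⊓ z = z₁`, so `y ⊔ z₁` is a
  -- larger such element.
  obtain ⟨y, ⟨z, hz, hza, hyz⟩, hmax⟩ := wellFounded_gt.has_min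
    {y | ∃ z ≠ ⊥, z ≤ a ∧ Disjoint y z} ⟨⊥, a, ha, le_rfl, disjoint_bot_left⟩
  obtain ⟨z₁, hz₁, z₂, hz₂, hd, h₁, h₂⟩ :
      ∃ z₁ ≤ z, ∃ z₂ ≤ z, Disjoint z₁ z₂ ∧ z₁ ≠ ⊥ ∧ z₂ ≠ ⊥ := by
    simpa [IsUniform, hz] using h z hza
  have hdisj : Disjoint (y ⊔ z₁) z₂ := by
    rw [disjoint_iff, ← le_bot_iff]
    calc (y ⊔ z₁) ⊓ z₂ ≤ (z₁ ⊔ y) ⊓ z ⊓ z₂ :=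
          le_inf (le_inf (inf_le_left.trans (sup_comm y z₁).le) (inf_le_right.trans hz₂))
            inf_le_right
      _ = z₁ ⊓ z₂ := by rw [sup_inf_assoc_of_le y hz₁, hyz.eq_bot, sup_bot_eq]
      _ = ⊥ := hd.eq_bot
  exact hmax (y ⊔ z₁) ⟨z₂, h₂, hz₂.trans hza, hdisj⟩
    (left_lt_sup.2 fun hle => h₁ (disjoint_self.1 (hyz.mono hle hz₁)))

theorem exists_finset_isUniform_isEssentialIn_top :
    ∃ s : Finset α, s.SupIndep id ∧ (∀ u ∈ s, IsUniform u) ∧ IsEssentialIn (s.sup id) ⊤ := by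
  classical
  obtain ⟨_, ⟨s, hs, hu, rfl⟩, hmax⟩ := wellFounded_gt.has_min
    {a | ∃ s : Finset α, s.SupIndep id ∧ (∀ u ∈ s, IsUniform u) ∧ s.sup id = a}
    ⟨⊥, ∅, Finset.supIndep_empty _, by simp, Finset.sup_empty⟩
  refine ⟨s, hs, hu, le_top, fun x _ hx => ?_⟩
  by_contra hx0
  obtain ⟨u, hux, hu'⟩ := exists_isUniform_le hx0
  have hdisj : Disjoint u (s.sup id) := hx.mono_left hux
  refine hmax _ ⟨insert u s, hs.insert hdisj, Finset.forall_mem_insert _ _ _ |>.2 ⟨hu', hu⟩, rfl⟩ ?_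
  rw [Finset.sup_insert]
  exact right_lt_sup.2 fun hle => hu'.1 (hdisj.eq_bot_of_le hle)

theorem WellFoundedGT.exists_card_le_of_iSupIndep :
    ∃ n : ℕ, ∀ (m : ℕ) (g : Fin m → α), iSupIndep g → (∀ i, g i ≠ ⊥) → m ≤ n := by
  obtain ⟨s, hs, hu, he⟩ := exists_finset_isUniform_isEssentialIn_top (α := α)
  refine ⟨s.card, fun m g hg hne => ?_⟩
  have key := card_le_card_of_isEssentialIn_top hs hu he
    (t := Finset.univ.map ⟨g, hg.injective hne⟩) (Finset.supIndep_map.2 (hg.supIndep' _))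
    (by simpa [eq_comm] using hne)
  simpa using key

end UniformDimension

theorem Submodule.toAddSubgroup_iSup_le {R M : Type*} [Ring R] [AddCommGroup M] [Module R M]
    {ι : Sort*} (p : ι → Submodule R M) :
    (⨆ i, p i).toAddSubgroup ≤ ⨆ i, (p i).toAddSubgroup := fun _ hx =>
  Submodule.iSup_induction p (motive := (· ∈ ⨆ i, (p i).toAddSubgroup)) hx
    (fun i _ hx => AddSubgroup.mem_iSup_of_mem i hx) (zero_mem _)
    fun _ _ => add_mem

theorem iSupIndep.of_toAddSubgroup {R M : Type*} [Ring R] [AddCommGroup M] [Module R M]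
    {ι : Type*} {p : ι → Submodule R M} (h : iSupIndep fun i => (p i).toAddSubgroup) :
    iSupIndep p := by
  intro i
  have hle : (⨆ j, ⨆ _ : j ≠ i, p j).toAddSubgroup ≤ ⨆ j, ⨆ _ : j ≠ i, (p j).toAddSubgroup :=
    (Submodule.toAddSubgroup_iSup_le _).trans
      (iSup_mono fun j => Submodule.toAddSubgroup_iSup_le fun _ : j ≠ i => p j)
  rw [Submodule.disjoint_def]
  intro x hx hx'
  exact (AddSubgroup.disjoint_def.1 (h i)) hx (hle hx')

namespace SemiGraded

variable (SG : SemiGraded B)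

def filtration (D : ℕ) : AddSubgroup B := ⨆ k ∈ Set.Iic D, SG.comp k

theorem comp_le_filtration {n D : ℕ} (h : n ≤ D) : SG.comp n ≤ SG.filtration D :=
  le_iSup₂ (f := fun k (_ : k ∈ Set.Iic D) => SG.comp k) n h

theorem filtration_mono : Monotone SG.filtration := fun _ _ h =>
  iSup₂_le fun _ hn => SG.comp_le_filtration (le_trans hn h)

theorem filtration_zero : SG.filtration 0 = SG.comp 0 :=
  le_antisymm (iSup₂_le fun n hn => by rw [Set.mem_Iic, Nat.le_zero] at hn; rw [hn])
    (SG.comp_le_filtration le_rfl)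

theorem mul_mem_filtration {a b : ℕ} {x y : B} (hx : x ∈ SG.filtration a)
    (hy : y ∈ SG.filtration b) : x * y ∈ SG.filtration (a + b) := by
  have hright : SG.filtration a ≤ (SG.filtration (a + b)).comap (AddMonoidHom.mulRight y) := by
    refine iSup₂_le fun i hi x hx => ?_
    have hleft : SG.filtration b ≤ (SG.filtration (a + b)).comap (AddMonoidHom.mulLeft x) :=
      iSup₂_le fun j hj y hy => SG.filtration_mono (add_le_add hi hj) (SG.mul_mem i j x hx y hy)
    exact hleft hy
  exact hright hx

theorem isB0Stable_filtration (D : ℕ) : SG.IsB0Stable (SG.filtration D) := fun c hc w hw => by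
  rw [← SG.filtration_zero] at hc
  rw [← zero_add D]
  exact SG.mul_mem_filtration hc hw

theorem exists_mem_filtration (x : B) : ∃ D, x ∈ SG.filtration D := by
  obtain ⟨a, rfl⟩ := SG.internal.surjective x
  induction a using DirectSum.induction_on with
  | zero => exact ⟨0, by simp [zero_mem]⟩
  | of i y => exact ⟨i, SG.comp_le_filtration le_rfl (by simp)⟩
  | add a b ha hb =>
    obtain ⟨Da, hDa⟩ := ha
    obtain ⟨Db, hDb⟩ := hb
    refine ⟨max Da Db, ?_⟩
    rw [map_add]
    exact add_mem (SG.filtration_mono (le_max_left Da Db) hDa)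
      (SG.filtration_mono (le_max_right Da Db) hDb)

theorem list_prod_mem_filtration {d : ℕ} {l : List B} (hl : ∀ x ∈ l, x ∈ SG.filtration d) :
    l.prod ∈ SG.filtration (d * l.length) := by
  induction l with
  | nil => simpa [SG.filtration_zero] using SG.one_mem'
  | cons x l ih =>
    rw [List.prod_cons, List.length_cons, mul_add_one, add_comm]
    exact SG.mul_mem_filtration (hl x List.mem_cons_self)
      (ih fun y hy => hl y (List.mem_cons_of_mem x hy))

def b0 : Subring B :=
  { SG.comp 0 with
    one_mem' := SG.one_mem'
    mul_mem' := fun ha hb => SG.filtration_zero ▸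
      SG.mul_mem_filtration (a := 0) (b := 0) (SG.filtration_zero ▸ ha) (SG.filtration_zero ▸ hb) }

theorem isNoetherianRing_b0 (hnoeth : ∀ c : ℕ →o AddSubgroup B,
      (∀ m, c m ≤ SG.comp 0 ∧ SG.IsB0Stable (c m)) → ∃ N, ∀ m, N ≤ m → c m = c N) :
    IsNoetherianRing SG.b0 := by
  rw [IsNoetherianRing, ← monotone_stabilizes_iff_noetherian]
  intro f
  let e : Submodule SG.b0 SG.b0 →o AddSubgroup B :=
    ⟨fun I => I.toAddSubgroup.map SG.b0.subtype.toAddMonoidHom, fun _ _ h =>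
      AddSubgroup.map_mono (Submodule.toAddSubgroup_mono h)⟩
  have he : Function.Injective e := (AddSubgroup.map_injective Subtype.val_injective).comp
    Submodule.toAddSubgroup_injective
  obtain ⟨N, hN⟩ := hnoeth (e.comp f) fun m => ⟨by rintro _ ⟨z, -, rfl⟩; exact z.2,
    by rintro c hc _ ⟨z, hz, rfl⟩; exact ⟨⟨c, hc⟩ * z, (f m).smul_mem ⟨c, hc⟩ hz, rfl⟩⟩
  exact ⟨N, fun m hm => he (hN m hm).symm⟩

def toB0Submodule (W : AddSubgroup B) (hW : SG.IsB0Stable W) : Submodule SG.b0 B :=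
  { W with smul_mem' := fun c _ hx => hW c c.2 _ hx }

def udimSet (W : AddSubgroup B) : Set ℕ :=
  {m : ℕ | ∃ f : Fin m → AddSubgroup B, (∀ i, f i ≠ ⊥) ∧ (∀ i, f i ≤ W) ∧
    (∀ i, SG.IsB0Stable (f i)) ∧ iSupIndep f}

theorem bddAbove_udimSet {Q : Submodule SG.b0 B} [IsNoetherian SG.b0 Q] {W : AddSubgroup B}
    (hW : W ≤ Q.toAddSubgroup) : BddAbove (SG.udimSet W) := by
  have : WellFoundedGT (Set.Iic Q) := Q.mapIic.symm.strictMono.wellFoundedGT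
  obtain ⟨n, hn⟩ := WellFoundedGT.exists_card_le_of_iSupIndep (α := Set.Iic Q)
  refine ⟨n, ?_⟩
  rintro m ⟨f, hne, hle, hst, hind⟩
  refine hn m (fun i => ⟨SG.toB0Submodule (f i) (hst i), (hle i).trans hW⟩)
    (iSupIndep.of_coe_Iic_comp (iSupIndep.of_toAddSubgroup hind)) fun i h => hne i ?_
  exact congrArg (fun p : Set.Iic Q => (p : Submodule SG.b0 B).toAddSubgroup) h

theorem udim_mono {W W' : AddSubgroup B} (h : W ≤ W') (hbdd : BddAbove (SG.udimSet W')) :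
    SG.udim W ≤ SG.udim W' := by
  refine csSup_le_csSup hbdd ⟨0, finZeroElim, finZeroElim, finZeroElim, finZeroElim, finZeroElim⟩ ?_
  rintro m ⟨f, hne, hle, hst, hind⟩
  exact ⟨f, hne, fun i => (hle i).trans h, hst, hind⟩

theorem one_le_udim {W : AddSubgroup B} (hW : W ≠ ⊥) (hst : SG.IsB0Stable W)
    (hbdd : BddAbove (SG.udimSet W)) : 1 ≤ SG.udim W :=
  le_csSup hbdd ⟨fun _ => W, fun _ => hW, fun _ => le_rfl, fun _ => hst, iSupIndep_subsingleton _⟩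

theorem subset_b0Span (s : Set B) : s ⊆ SG.b0Span s := fun w hw =>
  AddSubgroup.subset_closure ⟨1, SG.one_mem', w, hw, (one_mul w).symm⟩

theorem b0Span_le {s : Set B} {W : AddSubgroup B} (hW : SG.IsB0Stable W) (h : s ⊆ W) :
    SG.b0Span s ≤ W :=
  (AddSubgroup.closure_le W).2 fun _ ⟨c, hc, _, hw, hy⟩ => hy ▸ hW c hc _ (h hw)

theorem isB0Stable_b0Span (s : Set B) : SG.IsB0Stable (SG.b0Span s) := by
  intro c hc w hw
  induction hw using AddSubgroup.closure_induction with
  | mem x hx =>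
    obtain ⟨c', hc', w', hw', rfl⟩ := hx
    exact AddSubgroup.subset_closure
      ⟨c * c', SG.b0.mul_mem hc hc', w', hw', (mul_assoc c c' w').symm⟩
  | zero => simp [zero_mem]
  | add x y _ _ hx hy => simpa [mul_add] using add_mem hx hy
  | neg x _ hx => simpa using neg_mem hx

variable {k : ℕ} (v : Fin k → B)

theorem isB0Stable_framePow (m : ℕ) : SG.IsB0Stable (SG.framePow v m) :=
  SG.isB0Stable_b0Span _

theorem list_prod_mem_framePow {l : List B} (hl : ∀ x ∈ l, x ∈ SG.b0Span (Set.range v)) :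
    l.prod ∈ SG.framePow v l.length :=
  SG.subset_b0Span _ ⟨l.get, fun j => hl _ (List.get_mem l j), by rw [List.ofFn_get]⟩

theorem mul_mem_framePow {a b : ℕ} (hb : b ≠ 0) {x y : B} (hx : x ∈ SG.framePow v a)
    (hy : y ∈ SG.framePow v b) : x * y ∈ SG.framePow v (a + b) := by
  suffices key : ∀ l : List B, (∀ z ∈ l, z ∈ SG.b0Span (Set.range v)) → l.length = a →
      l.prod * y ∈ SG.framePow v (a + b) by
    have hstable : SG.IsB0Stable ((SG.framePow v (a + b)).comap (AddMonoidHom.mulRight y)) :=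
      fun c hc z hz => by
        simpa [mul_assoc] using SG.isB0Stable_framePow v (a + b) c hc _ hz
    refine SG.b0Span_le hstable ?_ hx
    rintro _ ⟨w, hw, rfl⟩
    exact key _ (by simpa [List.forall_mem_ofFn_iff] using hw) (List.length_ofFn)
  intro l hl hla
  obtain ⟨b, rfl⟩ := Nat.exists_eq_succ_of_ne_zero hb
  -- The `B₀`-coefficient of `y` is absorbed into the first factor of its product; hence `b ≠ 0`.
  refine (AddSubgroup.closure_le ((SG.framePow v _).comap (AddMonoidHom.mulLeft l.prod))).2
    ?_ hy
  rintro _ ⟨c, hc, _, ⟨w, hw, rfl⟩, rfl⟩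
  have hw₀ : c * w 0 ∈ SG.b0Span (Set.range v) := SG.isB0Stable_b0Span _ c hc _ (hw 0)
  have := SG.list_prod_mem_framePow v (l := l ++ (c * w 0) :: List.ofFn fun i => w i.succ)
    (by simpa [or_imp, forall_and, hw₀, List.forall_mem_ofFn_iff]
      using ⟨hl, fun i : Fin b => hw i.succ⟩)
  simpa [List.ofFn_succ, mul_assoc, hla] using this

theorem one_mem_framePow (h1 : (1 : B) ∈ SG.b0Span (Set.range v)) (m : ℕ) :
    (1 : B) ∈ SG.framePow v m := by
  simpa using SG.list_prod_mem_framePow v (l := List.replicate m 1)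
    fun x hx => List.eq_of_mem_replicate hx ▸ h1

theorem framePow_mono (h1 : (1 : B) ∈ SG.b0Span (Set.range v)) :
    Monotone (SG.framePow v) := by
  intro a b hab x hx
  obtain ⟨c, rfl⟩ := Nat.exists_eq_add_of_le hab
  rcases eq_or_ne c 0 with rfl | hc
  · exact hx
  · simpa using SG.mul_mem_framePow v hc hx (SG.one_mem_framePow v h1 c)

theorem exists_mem_framePow (h1 : (1 : B) ∈ SG.b0Span (Set.range v))
    (hgen : Subring.closure ((SG.comp 0 : Set B) ∪ Set.range v) = ⊤) (x : B) :
    ∃ p, x ∈ SG.framePow v p := by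
  have hx : x ∈ Subring.closure ((SG.comp 0 : Set B) ∪ Set.range v) := hgen ▸ trivial
  induction hx using Subring.closure_induction with
  | mem z hz =>
    rcases hz with hz | ⟨i, rfl⟩
    · exact ⟨0, by simpa using SG.isB0Stable_framePow v 0 z hz 1 (SG.one_mem_framePow v h1 0)⟩
    · have hvi := SG.list_prod_mem_framePow v (l := [v i])
        (by simpa using SG.subset_b0Span _ (Set.mem_range_self i))
      exact ⟨1, by simpa using hvi⟩
  | zero => exact ⟨0, zero_mem _⟩
  | one => exact ⟨0, SG.one_mem_framePow v h1 0⟩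
  | add a b _ _ ha hb =>
    obtain ⟨pa, hpa⟩ := ha
    obtain ⟨pb, hpb⟩ := hb
    exact ⟨max pa pb, add_mem (SG.framePow_mono v h1 (le_max_left pa pb) hpa)
      (SG.framePow_mono v h1 (le_max_right pa pb) hpb)⟩
  | neg a _ ha =>
    obtain ⟨pa, hpa⟩ := ha
    exact ⟨pa, neg_mem hpa⟩
  | mul a b _ _ ha hb =>
    obtain ⟨pa, hpa⟩ := ha
    obtain ⟨pb, hpb⟩ := hb
    exact ⟨pa + (pb + 1), SG.mul_mem_framePow v pb.succ_ne_zero hpa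
      (SG.framePow_mono v h1 pb.le_succ hpb)⟩

theorem exists_forall_mem_framePow (h1 : (1 : B) ∈ SG.b0Span (Set.range v))
    (hgen : Subring.closure ((SG.comp 0 : Set B) ∪ Set.range v) = ⊤) {k' : ℕ} (w : Fin k' → B) :
    ∃ p ≠ 0, ∀ i, w i ∈ SG.framePow v p := by
  choose p hp using fun i => SG.exists_mem_framePow v h1 hgen (w i)
  exact ⟨Finset.univ.sup p + 1, Nat.succ_ne_zero _, fun i =>
    SG.framePow_mono v h1 ((Finset.le_sup (Finset.mem_univ i)).trans (Nat.le_succ _)) (hp i)⟩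

theorem framePow_le_framePow_mul {k' : ℕ} {w : Fin k' → B} {p : ℕ} (hp : p ≠ 0)
    (hw : ∀ i, w i ∈ SG.framePow v p) (m : ℕ) :
    SG.framePow w m ≤ SG.framePow v (p * m) := by
  have hW : SG.b0Span (Set.range w) ≤ SG.framePow v p :=
    SG.b0Span_le (SG.isB0Stable_framePow v p) (Set.range_subset_iff.2 hw)
  have hprod : ∀ l : List B, (∀ z ∈ l, z ∈ SG.framePow v p) →
      l.prod ∈ SG.framePow v (p * l.length) := by
    intro l hl
    induction l using List.reverseRecOn with
    | nil => simpa using SG.list_prod_mem_framePow v (l := []) (by simp)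
    | append_singleton l z ih =>
      simpa [mul_add_one] using SG.mul_mem_framePow v hp
        (ih fun y hy => hl y (by simp [hy])) (hl z (by simp))
  refine SG.b0Span_le (SG.isB0Stable_framePow v _) ?_
  rintro _ ⟨z, hz, rfl⟩
  simpa using hprod (List.ofFn z) (by simpa [List.forall_mem_ofFn_iff] using fun j => hW (hz j))

theorem framePow_le_filtration {d : ℕ} (hv : ∀ i, v i ∈ SG.filtration d) (m : ℕ) :
    SG.framePow v m ≤ SG.filtration (d * m) := by
  have hV : SG.b0Span (Set.range v) ≤ SG.filtration d :=
    SG.b0Span_le (SG.isB0Stable_filtration d) (Set.range_subset_iff.2 hv)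
  refine SG.b0Span_le (SG.isB0Stable_filtration _) ?_
  rintro _ ⟨z, hz, rfl⟩
  simpa using SG.list_prod_mem_filtration (l := List.ofFn z)
    (by simpa [List.forall_mem_ofFn_iff] using fun j => hV (hz j))

theorem one_le_udim_framePow [Nontrivial B] (h1 : (1 : B) ∈ SG.b0Span (Set.range v)) (m : ℕ)
    (hbdd : BddAbove (SG.udimSet (SG.framePow v m))) : 1 ≤ SG.udim (SG.framePow v m) :=
  SG.one_le_udim (fun h => one_ne_zero (AddSubgroup.mem_bot.1 (h ▸ SG.one_mem_framePow v h1 m)))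
    (SG.isB0Stable_framePow v m) hbdd

end SemiGraded

namespace FinitelySemiGraded

variable (F : FinitelySemiGraded B)

theorem exists_finite_filtration_le_span (D : ℕ) :
    ∃ s : Set B, s.Finite ∧ F.filtration D ≤ (Submodule.span F.b0 s).toAddSubgroup := by
  classical
  choose k v hv using F.free
  refine ⟨⋃ n ∈ Set.Iic D, Set.range (v n),
    (Set.finite_Iic D).biUnion fun n _ => Set.finite_range _, iSup₂_le fun n hn b hb => ?_⟩
  obtain ⟨c, ⟨hc, rfl⟩, -⟩ := (hv n).2 b hb
  exact Submodule.sum_mem _ fun i _ => Submodule.smul_mem _ (⟨c i, hc i⟩ : F.b0)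
    (Submodule.subset_span (Set.mem_biUnion hn (Set.mem_range_self i)))

theorem bddAbove_udimSet_framePow (hnoeth : ∀ c : ℕ →o AddSubgroup B,
      (∀ m, c m ≤ F.comp 0 ∧ F.IsB0Stable (c m)) → ∃ N, ∀ m, N ≤ m → c m = c N)
    {k : ℕ} (v : Fin k → B) (m : ℕ) : BddAbove (F.udimSet (F.framePow v m)) := by
  choose D hD using fun i => F.exists_mem_filtration (v i)
  obtain ⟨s, hs, hle⟩ := F.exists_finite_filtration_le_span (Finset.univ.sup D * m)
  have := F.isNoetherianRing_b0 hnoeth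
  have := isNoetherian_of_fg_of_noetherian _ (Submodule.fg_span (R := F.b0) hs)
  exact F.bddAbove_udimSet ((F.framePow_le_filtration v
    (fun i => F.filtration_mono (Finset.le_sup (Finset.mem_univ i)) (hD i)) m).trans hle)

end FinitelySemiGraded

open Filter Real Topology in
theorem tendsto_log_mul_div_log {p : ℕ} (hp : p ≠ 0) :
    Tendsto (fun m : ℕ => log ((p * m : ℕ) : ℝ) / log m) atTop (𝓝 1) := by
  have hlog : Tendsto (fun m : ℕ => log p / log m) atTop (𝓝 0) :=
    tendsto_const_nhds.div_atTop (tendsto_log_atTop.comp tendsto_natCast_atTop_atTop)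
  refine (by simpa using hlog.const_add 1 : Tendsto (fun m : ℕ => 1 + log p / log m) _ _).congr' ?_
  filter_upwards [eventually_ge_atTop 2] with m hm
  have hm' : (1 : ℝ) < m := by exact_mod_cast hm
  rw [Nat.cast_mul, log_mul (by exact_mod_cast hp) (by positivity), add_div,
    div_self (log_pos hm').ne', add_comm]

open Filter Real Topology in
theorem limsup_logb_le_of_le_comp_mul {a b : ℕ → ℕ} {p : ℕ} (hp : p ≠ 0) (ha : ∀ m, 1 ≤ a m)
    (hb : ∀ m, b m ≤ a (p * m)) :
    limsup (fun m : ℕ => ((logb m (b m) : ℝ) : EReal)) atTop ≤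
      limsup (fun m : ℕ => ((logb m (a m) : ℝ) : EReal)) atTop := by
  set u : ℕ → EReal := fun m => ((logb m (a m) : ℝ) : EReal)
  set t : ℕ → EReal := fun m => ((log ((p * m : ℕ) : ℝ) / log m : ℝ) : EReal)
  have ht : Tendsto t atTop (𝓝 1) := EReal.tendsto_coe.2 (tendsto_log_mul_div_log hp)
  have hpm : Tendsto (fun m : ℕ => p * m) atTop atTop :=
    tendsto_atTop_mono (fun m => Nat.le_mul_of_pos_left m (Nat.pos_of_ne_zero hp)) tendsto_id
  have hlarge : ∀ᶠ m : ℕ in atTop, 2 ≤ m ∧ 2 ≤ p * m :=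
    (eventually_ge_atTop 2).and (hpm.eventually (eventually_ge_atTop 2))
  -- `logb m x = logb (p m) x * (log (p m) / log m)`, and the second factor tends to `1`.
  have hle : ∀ᶠ m : ℕ in atTop, ((logb m (b m) : ℝ) : EReal) ≤ ((u ∘ (p * ·)) * t) m := by
    filter_upwards [hlarge] with m ⟨hm, hpm₂⟩
    have hm' : (1 : ℝ) < m := by exact_mod_cast hm
    have hpm' : (1 : ℝ) < (p * m : ℕ) := by exact_mod_cast hpm₂
    simp only [Function.comp, Pi.mul_apply, u, t, ← EReal.coe_mul, EReal.coe_le_coe_iff]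
    calc logb m (b m) ≤ logb m (a (p * m)) := by
          rcases Nat.eq_zero_or_pos (b m) with h | h
          · simpa [h] using logb_nonneg hm' (by exact_mod_cast ha (p * m))
          · exact logb_le_logb_of_le hm' (by exact_mod_cast h) (by exact_mod_cast hb m)
      _ = _ := by
          rw [logb, logb, div_mul_div_cancel₀ (log_pos hpm').ne']
  have hu : ∃ᶠ m in atTop, 0 ≤ (u ∘ (p * ·)) m :=
    (hlarge.mono fun m hm => EReal.coe_nonneg.2
      (logb_nonneg (by exact_mod_cast hm.2) (by exact_mod_cast ha (p * m)))).frequently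
  have ht₀ : 0 ≤ᶠ[atTop] t := hlarge.mono fun m hm => EReal.coe_nonneg.2
    (div_nonneg (log_nonneg (by exact_mod_cast hm.2.trans' one_le_two))
      (log_nonneg (by exact_mod_cast hm.1.trans' one_le_two)))
  calc limsup (fun m : ℕ => ((logb m (b m) : ℝ) : EReal)) atTop
      ≤ limsup ((u ∘ (p * ·)) * t) atTop := limsup_le_limsup hle
    _ ≤ limsup (u ∘ (p * ·)) atTop * limsup t atTop :=
        EReal.limsup_mul_le hu ht₀ (Or.inr (ht.limsup_eq ▸ EReal.coe_ne_top 1))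
          (Or.inr (ht.limsup_eq ▸ one_ne_zero))
    _ = limsup (u ∘ (p * ·)) atTop := by rw [ht.limsup_eq, mul_one]
    _ ≤ limsup u atTop := hpm.limsup_comp_le_limsup

theorem ggkdim_eq_of_generating_frame_general [Nontrivial B] (F : FinitelySemiGraded B)
    (hnoeth : ∀ c : ℕ →o AddSubgroup B,
      (∀ m, c m ≤ F.comp 0 ∧ F.toSemiGraded.IsB0Stable (c m)) →
      ∃ N, ∀ m, N ≤ m → c m = c N)
    {k : ℕ} (v : Fin k → B) (hv : F.toSemiGraded.IsFrame v)
    (hgen : Subring.closure ((F.comp 0 : Set B) ∪ Set.range v) = ⊤) :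
    F.toSemiGraded.GGKdim =
      Filter.limsup
        (fun m : ℕ =>
          ((Real.logb m (F.toSemiGraded.udim (F.toSemiGraded.framePow v m)) : ℝ) : EReal))
        Filter.atTop := by
  refine le_antisymm (iSup_le fun k' => iSup_le fun w => iSup_le fun _ => ?_)
    (le_iSup₂_of_le k v (le_iSup_of_le hv le_rfl))
  obtain ⟨p, hp, hw⟩ := F.exists_forall_mem_framePow v hv.2 hgen w
  exact limsup_logb_le_of_le_comp_mul hp
    (fun m => F.one_le_udim_framePow v hv.2 m (F.bddAbove_udimSet_framePow hnoeth v m))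
    fun m => F.udim_mono (F.framePow_le_framePow_mul v hp hw m)
      (F.bddAbove_udimSet_framePow hnoeth v (p * m))

/-- Let `B` be an FSG ring whose `B_0` is a left noetherian domain and let `V` be a
generating frame of `B`.  Then `GGKdim(B) = limsup_{m→∞} log_m (udim V^m)`; in
particular this value does not depend on the generating frame `V`. -/
theorem ggkdim_eq_of_generating_frame [Nontrivial B] (F : FinitelySemiGraded B)
    (hdom : ∀ a ∈ F.comp 0, ∀ b ∈ F.comp 0, a * b = 0 → a = 0 ∨ b = 0)
    (hnoeth : ∀ c : ℕ →o AddSubgroup B,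
      (∀ m, c m ≤ F.comp 0 ∧ F.toSemiGraded.IsB0Stable (c m)) →
      ∃ N, ∀ m, N ≤ m → c m = c N)
    {k : ℕ} (v : Fin k → B) (hv : F.toSemiGraded.IsFrame v)
    (hgen : Subring.closure ((F.comp 0 : Set B) ∪ Set.range v) = ⊤) :
    F.toSemiGraded.GGKdim =
      Filter.limsup
        (fun m : ℕ =>
          ((Real.logb m (F.toSemiGraded.udim (F.toSemiGraded.framePow v m)) : ℝ) : EReal))
        Filter.atTop :=
  ggkdim_eq_of_generating_frame_general F hnoeth v hv hgen
end
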